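/- Let α = 2cos(2π/7). If a unit u = ±α^{ℓ₁}(α²−1)^{ℓ₂} of ℤ[α] is totally positive (all three real embeddings positive), then both ℓ₁ and ℓ₂ are even and the sign is +; equivalently, every totally positive unit of ℚ(α) is a square of a unit. -/
import Mathlib


open Real

/-- Let `α = 2cos(2π/7)`, with conjugates `α' = −1/(α+1)` and `α'' = −(1+1/α)` under
the other two real embeddings of `ℚ(α)`.  If the unit `u = ±α^{ℓ₁}(α²−1)^{ℓ₂}` is
totally positive (i.e. its image `s·β^{ℓ₁}(β²−1)^{ℓ₂}` is positive for
`β ∈ {α, α', α''}`), then the sign is `+` and both `ℓ₁` and `ℓ₂` are even;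
equivalently, every totally positive unit of `ℚ(α)` is a square of a unit. -/
theorem totally_positive_units_are_squares_cubic
    (s : ℝ) (hs : s = 1 ∨ s = -1) (ℓ₁ ℓ₂ : ℤ)
    (hpos : ∀ β : ℝ,
      (β = 2 * Real.cos (2 * π / 7) ∨
        β = -1 / (2 * Real.cos (2 * π / 7) + 1) ∨
        β = -(1 + 1 / (2 * Real.cos (2 * π / 7)))) →
      0 < s * β ^ ℓ₁ * (β ^ 2 - 1) ^ ℓ₂) :
    s = 1 ∧ Even ℓ₁ ∧ Even ℓ₂ := by
  obtain ⟨c, hc⟩ : ∃ c : ℝ, c = 2 * Real.cos (2 * π / 7) := ⟨_, rfl⟩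
  rw [← hc] at hpos
  have hpi := Real.pi_pos
  have hc1 : 1 < c := by
    have h := Real.cos_lt_cos_of_nonneg_of_le_pi (by positivity)
      (by linarith) (show 2 * π / 7 < π / 3 by linarith)
    rw [Real.cos_pi_div_three] at h
    rw [hc]; linarith
  have hc2 : c < 2 := by
    have h := Real.cos_lt_cos_of_nonneg_of_le_pi le_rfl
      (by linarith) (show (0:ℝ) < 2 * π / 7 by positivity)
    rw [Real.cos_zero] at h
    rw [hc]; linarith
  have ha : (0:ℝ) < c := by linarith
  have ha2 : (0:ℝ) < c ^ 2 - 1 := by nlinarith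
  obtain ⟨b, hb⟩ : ∃ b : ℝ, b = -1 / (c + 1) := ⟨_, rfl⟩
  rw [← hb] at hpos
  have hcb : b * (c + 1) = -1 := by rw [hb]; field_simp
  have hbneg : b < 0 := by nlinarith
  have hbgt : -1 < b := by nlinarith
  have hb2 : b ^ 2 - 1 < 0 := by nlinarith
  obtain ⟨d, hd⟩ : ∃ d : ℝ, d = -(1 + 1 / c) := ⟨_, rfl⟩
  rw [← hd] at hpos
  have hcd : d * c = -(c + 1) := by rw [hd]; field_simp
  have hdlt : d < -3/2 := by nlinarith
  have hdneg : d < 0 := by linarith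
  have hd2 : (0:ℝ) < d ^ 2 - 1 := by nlinarith
  have hs1 : s = 1 := by
    rcases hs with h | h
    · exact h
    · exfalso
      have hp := hpos c (Or.inl rfl)
      have h1 : (0:ℝ) < c ^ ℓ₁ := zpow_pos ha _
      have h2 : (0:ℝ) < (c ^ 2 - 1) ^ ℓ₂ := zpow_pos ha2 _
      rw [h] at hp
      nlinarith
  subst hs1
  have he1 : Even ℓ₁ := by
    by_contra h
    have hodd : Odd ℓ₁ := Int.not_even_iff_odd.mp h
    have hp := hpos d (Or.inr (Or.inr rfl))
    have h1 : d ^ ℓ₁ < 0 := (Odd.zpow_neg_iff hodd).mpr hdneg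
    have h2 : (0:ℝ) < (d ^ 2 - 1) ^ ℓ₂ := zpow_pos hd2 _
    nlinarith
  have he2 : Even ℓ₂ := by
    by_contra h
    have hodd : Odd ℓ₂ := Int.not_even_iff_odd.mp h
    have hp := hpos b (Or.inr (Or.inl rfl))
    have h1 : (0:ℝ) < b ^ ℓ₁ := by
      rcases eq_or_ne ℓ₁ 0 with h0 | h0
      · simp [h0]
      · exact (Even.zpow_pos_iff he1 h0).mpr (ne_of_lt hbneg)
    have h2 : (b ^ 2 - 1) ^ ℓ₂ < 0 := (Odd.zpow_neg_iff hodd).mpr hb2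
    nlinarith
  exact ⟨rfl, he1, he2⟩
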